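/- In the topos of trees, every endomap F on a hom-object of the form ▶A → A has a unique fixed point: there is a fixed-point combinator Θ : (▶A → A) → A such that Θ f = f (next (Θ f)), and any u with f (next u) = u equals Θ f. -/

import Mathlib

/-- An object of the topos of trees `S`. -/
structure Obj where
  X : ℕ → Type
  r : ∀ i, X (i + 1) → X i

def IsHom (A B : Obj) (f : ∀ i, A.X i → B.X i) : Prop :=
  ∀ i a, B.r i (f (i + 1) a) = f i (A.r i a)

/-- Global elements `1 → A` of an object `A`. -/
def GS (A : Obj) : Type :=
  { x : ∀ i, A.X i // ∀ i, A.r i (x (i + 1)) = x i }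

/-- Carrier of `▶A`: `(▶A)₁ = {*}` and `(▶A)ᵢ₊₁ = Aᵢ`. -/
def LaterX (A : Obj) : ℕ → Type
  | 0 => PUnit
  | j + 1 => A.X j

def LaterR (A : Obj) : ∀ i, LaterX A (i + 1) → LaterX A i
  | 0 => fun _ => ⟨⟩
  | j + 1 => A.r j

/-- The later functor `▶` on objects. -/
def Later (A : Obj) : Obj := ⟨LaterX A, LaterR A⟩

/-- The natural transformation `next : X → ▶X`. -/
def nextMap (A : Obj) : ∀ i, A.X i → LaterX A i
  | 0 => fun _ => ⟨⟩
  | j + 1 => A.r j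

/-! Since `(▶A)₀` is a point and `(▶A)ᵢ₊₁ = Aᵢ`, the fixed-point equation at stage `i + 1` only
involves stage `i`, so a fixed point is forced by the recursion `x₀ = f₀ *`, `xᵢ₊₁ = fᵢ₊₁ xᵢ`;
naturality of `f` makes the resulting family a global element. -/

namespace Obj

variable {A : Obj}

def IsFixedPoint (f : ∀ i, LaterX A i → A.X i) (x : ∀ i, A.X i) : Prop :=
  ∀ i, f i (nextMap A i (x i)) = x i

def fixSeq (f : ∀ i, LaterX A i → A.X i) : ∀ i, A.X i
  | 0 => f 0 ⟨⟩
  | i + 1 => f (i + 1) (fixSeq f i)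

theorem r_fixSeq {f : ∀ i, LaterX A i → A.X i} (hf : IsHom (Later A) A f) (i : ℕ) :
    A.r i (fixSeq f (i + 1)) = fixSeq f i := by
  induction i with
  | zero => exact hf 0 _
  | succ i ih =>
    calc A.r (i + 1) (f (i + 2) (fixSeq f (i + 1)))
        = f (i + 1) (A.r i (fixSeq f (i + 1))) := hf (i + 1) _
      _ = f (i + 1) (fixSeq f i) := by rw [ih]

def fix (f : { f : ∀ i, LaterX A i → A.X i // IsHom (Later A) A f }) : GS A :=
  ⟨fixSeq f.1, r_fixSeq f.2⟩

theorem isFixedPoint_fixSeq {f : ∀ i, LaterX A i → A.X i} (hf : IsHom (Later A) A f) :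
    IsFixedPoint f (fixSeq f)
  | 0 => rfl
  | i + 1 => congrArg (f (i + 1)) (r_fixSeq hf i)

theorem eq_fixSeq_of_isFixedPoint {f : ∀ i, LaterX A i → A.X i} (u : GS A)
    (hu : IsFixedPoint f u.1) : u.1 = fixSeq f := by
  funext i
  induction i with
  | zero => exact (hu 0).symm
  | succ i ih =>
    calc u.1 (i + 1) = f (i + 1) (A.r i (u.1 (i + 1))) := (hu (i + 1)).symm
      _ = f (i + 1) (u.1 i) := by rw [u.2 i]
      _ = fixSeq f (i + 1) := by rw [ih]; rfl

end Obj

/-- Banach's fixed point theorem in the topos of trees: every morphism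
`f : ▶A → A` has a unique fixed point; in particular there is a fixed-point
combinator `Θ` with `Θ f = f (next (Θ f))`, and any `u` with `f (next u) = u`
equals `Θ f`. -/
theorem fixed_point_combinator (A : Obj) :
    ∃ Θ : { f : ∀ i, LaterX A i → A.X i // IsHom (Later A) A f } → GS A,
      ∀ f, (∀ i, f.1 i (nextMap A i ((Θ f).1 i)) = (Θ f).1 i) ∧
        ∀ u : GS A, (∀ i, f.1 i (nextMap A i (u.1 i)) = u.1 i) → u = Θ f :=
  ⟨Obj.fix, fun f =>
    ⟨Obj.isFixedPoint_fixSeq f.2, fun u hu => Subtype.ext (Obj.eq_fixSeq_of_isFixedPoint u hu)⟩⟩
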